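/- Let n ≥ 1 and u, v ∈ ℝⁿ. Define f(α, β) = Σᵢ αᵢ·log(αᵢ/βᵢ) for α, β ∈ [0,∞)ⁿ (with the conventions 0·log(0/b) = 0 for b ≥ 0 and a·log(a/0) = +∞ for a > 0). Then the convex conjugate sup{⟨u,α⟩ + ⟨v,β⟩ − f(α,β) : α, β ∈ [0,∞)ⁿ} equals 0 if vᵢ ≤ −exp(uᵢ − 1) for every i, and equals +∞ otherwise. -/

import Mathlib

/-!
Termwise, `a·log(a/b) ≥ a − c` for `c = e^{u−1}·b` (the tangent-line bound for `log`), so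
`u·a + v·b ≤ a·log(a/b)` whenever `v ≤ −e^{u−1}`; the supremum is then `0`, attained at
`α = β = 0`. If `vᵢ > −e^{uᵢ−1}` for some `i`, then along the ray `α = t·eᵢ`,
`β = t·e^{1−uᵢ}·eᵢ` the objective equals `t·(1 + vᵢ·e^{1−uᵢ})`, which is unbounded.
-/

open scoped ENNReal NNReal Classical BigOperators

/-- The entropy-type term `a·log(a/b)` for `a, b ≥ 0`, with the conventions
`0·log(0/b) = 0` for `b ≥ 0` and `a·log(a/0) = +∞` for `a > 0`. -/
noncomputable def entTerm (a b : ℝ≥0) : EReal :=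
  if a = 0 then 0 else if b = 0 then ⊤ else (((a : ℝ) * Real.log ((a : ℝ) / (b : ℝ)) : ℝ) : EReal)

open Real

lemma EReal.coe_finset_sum {ι : Type*} (s : Finset ι) (f : ι → ℝ) :
    ((∑ i ∈ s, f i : ℝ) : EReal) = ∑ i ∈ s, (f i : EReal) :=
  map_sum (⟨⟨Real.toEReal, EReal.coe_zero⟩, EReal.coe_add⟩ : ℝ →+ EReal) f s

lemma sub_le_mul_log_div {a c : ℝ} (ha : 0 < a) (hc : 0 < c) : a - c ≤ a * log (a / c) := by
  have h := one_sub_inv_le_log_of_pos (div_pos ha hc)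
  rw [inv_div] at h
  calc a - c = a * (1 - c / a) := by field_simp
    _ ≤ a * log (a / c) := mul_le_mul_of_nonneg_left h ha.le

lemma mul_add_mul_le_mul_log_div {u v a b : ℝ} (hv : v ≤ -exp (u - 1)) (ha : 0 < a)
    (hb : 0 < b) : u * a + v * b ≤ a * log (a / b) := by
  have hgibbs := sub_le_mul_log_div ha (mul_pos (exp_pos (u - 1)) hb)
  rw [div_mul_eq_div_div_swap, log_div (by positivity) (exp_pos _).ne', log_exp] at hgibbs
  nlinarith [mul_le_mul_of_nonneg_right hv hb.le]

lemma mul_add_mul_exp_sub_mul_log_div (u v : ℝ) {t : ℝ} (ht : t ≠ 0) :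
    u * t + v * (t * exp (1 - u)) - t * log (t / (t * exp (1 - u)))
      = t * (1 + v * exp (1 - u)) := by
  rw [div_mul_cancel_left₀ ht, log_inv, log_exp]
  ring

lemma entTerm_of_ne_zero {a b : ℝ≥0} (ha : a ≠ 0) (hb : b ≠ 0) :
    entTerm a b = ((a * log (a / b) : ℝ) : EReal) := by
  simp only [entTerm, ha, hb, if_false]

lemma coe_mul_add_mul_le_entTerm {u v : ℝ} (hv : v ≤ -exp (u - 1)) (a b : ℝ≥0) :
    ((u * a + v * b : ℝ) : EReal) ≤ entTerm a b := by
  by_cases ha : a = 0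
  · have hv0 : v ≤ 0 := hv.trans (neg_nonpos.2 (exp_pos _).le)
    simp only [entTerm, ha, if_true, NNReal.coe_zero, mul_zero, zero_add]
    exact_mod_cast mul_nonpos_of_nonpos_of_nonneg hv0 b.coe_nonneg
  by_cases hb : b = 0
  · simp only [entTerm, ha, hb, if_true, if_false, le_top]
  rw [entTerm_of_ne_zero ha hb, EReal.coe_le_coe_iff]
  exact mul_add_mul_le_mul_log_div hv (NNReal.coe_pos.2 (pos_iff_ne_zero.2 ha))
    (NNReal.coe_pos.2 (pos_iff_ne_zero.2 hb))

section Objective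

variable {ι : Type*} [Fintype ι]

noncomputable def entObjective (u v : ι → ℝ) (α β : ι → ℝ≥0) : EReal :=
  ((((∑ i, u i * (α i : ℝ)) + ∑ i, v i * (β i : ℝ) : ℝ) : EReal) - ∑ i, entTerm (α i) (β i))

lemma entObjective_zero (u v : ι → ℝ) : entObjective u v 0 0 = 0 := by
  simp [entObjective, entTerm]

lemma entObjective_nonpos {u v : ι → ℝ} (hv : ∀ i, v i ≤ -exp (u i - 1)) (α β : ι → ℝ≥0) :
    entObjective u v α β ≤ 0 := by
  rw [entObjective, EReal.sub_nonpos, ← Finset.sum_add_distrib, EReal.coe_finset_sum]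
  exact Finset.sum_le_sum fun i _ => coe_mul_add_mul_le_entTerm (hv i) (α i) (β i)

lemma entObjective_single [DecidableEq ι] (u v : ι → ℝ) (i : ι) (a b : ℝ≥0) :
    entObjective u v (Pi.single i a) (Pi.single i b)
      = ((u i * a + v i * b : ℝ) : EReal) - entTerm a b := by
  have hsingle (w : ι → ℝ) (c : ℝ≥0) : ∑ j, w j * ((Pi.single i c : ι → ℝ≥0) j : ℝ) = w i * c :=
    (Fintype.sum_eq_single i fun j hj => by simp [hj]).trans (by simp)
  have hent : ∑ j, entTerm ((Pi.single i a : ι → ℝ≥0) j) ((Pi.single i b : ι → ℝ≥0) j)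
      = entTerm a b :=
    (Fintype.sum_eq_single i fun j hj => by simp [hj, entTerm]).trans (by simp)
  rw [entObjective, hsingle, hsingle, hent]

lemma iSup_entObjective_eq_top {u v : ι → ℝ} {i : ι} (hv : -exp (u i - 1) < v i) :
    ⨆ (α : ι → ℝ≥0) (β : ι → ℝ≥0), entObjective u v α β = ⊤ := by
  set c := 1 + v i * exp (1 - u i)
  have hc : 0 < c := by
    have h := mul_lt_mul_of_pos_right hv (exp_pos (1 - u i))
    rw [neg_mul, ← exp_add, sub_add_sub_cancel', sub_self, exp_zero, neg_lt_iff_pos_add] at h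
    linarith
  refine (EReal.eq_top_iff_forall_lt _).2 fun M => ?_
  set t : ℝ≥0 := (M / c).toNNReal + 1
  have ht : t ≠ 0 := by positivity
  have hMt : M < t * c := by
    rw [← div_lt_iff₀ hc]
    exact (Real.le_coe_toNNReal _).trans_lt (by simp [t])
  calc (M : EReal) < ((t * c : ℝ) : EReal) := EReal.coe_lt_coe_iff.2 hMt
    _ = entObjective u v (Pi.single i t) (Pi.single i (t * (exp (1 - u i)).toNNReal)) := by
      rw [entObjective_single, entTerm_of_ne_zero ht (by positivity), ← EReal.coe_sub,
        NNReal.coe_mul, Real.coe_toNNReal _ (exp_pos _).le,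
        mul_add_mul_exp_sub_mul_log_div _ _ (NNReal.coe_ne_zero.2 ht)]
    _ ≤ _ := le_iSup₂ (f := entObjective u v) _ _

end Objective

theorem entTerm_conjugate (n : ℕ) (u v : Fin n → ℝ) :
    (⨆ (α : Fin n → ℝ≥0) (β : Fin n → ℝ≥0),
        ((((∑ i, u i * (α i : ℝ)) + ∑ i, v i * (β i : ℝ) : ℝ) : EReal)
          - ∑ i, entTerm (α i) (β i)))
    = if ∀ i, v i ≤ -Real.exp (u i - 1) then 0 else ⊤ := by
  change ⨆ (α : Fin n → ℝ≥0) (β : Fin n → ℝ≥0), entObjective u v α β = _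
  split_ifs with hv
  · exact le_antisymm (iSup₂_le (entObjective_nonpos hv))
      (le_iSup₂_of_le 0 0 (entObjective_zero u v).ge)
  · obtain ⟨i, hi⟩ := not_forall.1 hv
    exact iSup_entObjective_eq_top (not_le.1 hi)
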